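/- arXiv:2406.15579 — 5 statements merged into one kernel-verified Lean document; each statement's English description precedes it below -/
import Mathlib

section
/- The Laplace transform L{φ}(x) = ∫₀^∞ e^{−r x} φ(r) dr is bounded from L²(0, ∞) to L²(0, ∞) with operator norm at most √π; i.e., for all φ ∈ L²(0, ∞), ‖L{φ}‖_{L²(0,∞)} ≤ √π · ‖φ‖_{L²(0,∞)}. -/
/-!
Schur test with the weight `w t = t ^ (-1/2)`. Since `∫₀^∞ e^{-rx} r^{-1/2} dr = Γ(1/2) x^{-1/2}
= √π x^{-1/2}`, the symmetric kernel `e^{-rx}` satisfies both Schur conditions with constant `√π`.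
Cauchy–Schwarz against the weight gives
`|Lφ(x)|² ≤ √π x^{-1/2} ∫ e^{-rx} r^{1/2} |φ(r)|² dr`, and integrating in `x` (Tonelli, then the
same Gamma integral in `x`) yields `‖Lφ‖₂² ≤ π ‖φ‖₂²`.
-/

open MeasureTheory Set
open scoped ENNReal

section

variable {α β : Type*} [MeasurableSpace α] [MeasurableSpace β] {μ : Measure α} {ν : Measure β}

namespace ENNReal

theorem sq_lintegral_mul_le {f g : α → ℝ≥0∞} (hf : AEMeasurable f μ) (hg : AEMeasurable g μ) :
    (∫⁻ a, f a * g a ∂μ) ^ 2 ≤ (∫⁻ a, f a ^ 2 ∂μ) * ∫⁻ a, g a ^ 2 ∂μ := by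
  have holder := lintegral_mul_le_Lp_mul_Lq μ Real.HolderConjugate.two_two hf hg
  simp only [Pi.mul_apply, rpow_two] at holder
  calc (∫⁻ a, f a * g a ∂μ) ^ 2
      ≤ ((∫⁻ a, f a ^ 2 ∂μ) ^ (1 / 2 : ℝ) * (∫⁻ a, g a ^ 2 ∂μ) ^ (1 / 2 : ℝ)) ^ 2 := by gcongr
    _ = (∫⁻ a, f a ^ 2 ∂μ) * ∫⁻ a, g a ^ 2 ∂μ := by
      rw [mul_pow, ← rpow_mul_natCast, ← rpow_mul_natCast]
      norm_num

theorem sq_lintegral_mul_le_weighted {k w f : α → ℝ≥0∞} (hk : AEMeasurable k μ)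
    (hw : AEMeasurable w μ) (hf : AEMeasurable f μ) (hw₀ : ∀ᵐ a ∂μ, w a ≠ 0)
    (hw_top : ∀ᵐ a ∂μ, w a ≠ ∞) :
    (∫⁻ a, k a * f a ∂μ) ^ 2 ≤ (∫⁻ a, k a * w a ∂μ) * ∫⁻ a, k a * (f a ^ 2 / w a) ∂μ := by
  have hsqrt : ∀ x : ℝ≥0∞, (x ^ (2⁻¹ : ℝ)) ^ 2 = x := by
    simpa using rpow_inv_natCast_pow (n := 2) two_ne_zero
  have hsplit : ∀ᵐ a ∂μ,
      k a * f a = (k a * w a) ^ (2⁻¹ : ℝ) * (k a * (f a ^ 2 / w a)) ^ (2⁻¹ : ℝ) := by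
    filter_upwards [hw₀, hw_top] with a h₀ h_top
    rw [← mul_rpow_of_nonneg _ _ (by norm_num),
      show k a * w a * (k a * (f a ^ 2 / w a)) = (k a * f a) ^ 2 by
        rw [mul_mul_mul_comm, ENNReal.mul_div_cancel h₀ h_top]; ring,
      ← rpow_natCast, ← rpow_mul]
    norm_num
  calc (∫⁻ a, k a * f a ∂μ) ^ 2
      = (∫⁻ a, (k a * w a) ^ (2⁻¹ : ℝ) * (k a * (f a ^ 2 / w a)) ^ (2⁻¹ : ℝ) ∂μ) ^ 2 := by
        rw [lintegral_congr_ae hsplit]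
    _ ≤ _ := sq_lintegral_mul_le (by fun_prop) (by fun_prop)
    _ = _ := by simp only [hsqrt]

end ENNReal

theorem lintegral_sq_lintegral_mul_le_of_schur [SFinite μ] [SFinite ν] {K : α → β → ℝ≥0∞}
    (hK : Measurable (Function.uncurry K)) {p : α → ℝ≥0∞} {q : β → ℝ≥0∞} (hp : Measurable p)
    (hq : Measurable q) (hq₀ : ∀ᵐ y ∂ν, q y ≠ 0) (hq_top : ∀ᵐ y ∂ν, q y ≠ ∞) {A B : ℝ≥0∞}
    (hA : ∀ᵐ x ∂μ, ∫⁻ y, K x y * q y ∂ν ≤ A * p x)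
    (hB : ∀ᵐ y ∂ν, ∫⁻ x, K x y * p x ∂μ ≤ B * q y) {f : β → ℝ≥0∞} (hf : AEMeasurable f ν) :
    ∫⁻ x, (∫⁻ y, K x y * f y ∂ν) ^ 2 ∂μ ≤ A * B * ∫⁻ y, f y ^ 2 ∂ν := by
  obtain ⟨g, hg, hfg⟩ := hf
  have hKf : ∀ x, ∫⁻ y, K x y * f y ∂ν = ∫⁻ y, K x y * g y ∂ν := fun x ↦
    lintegral_congr_ae (hfg.mono fun y hy ↦ by simp only [hy])
  have hf2 : ∫⁻ y, f y ^ 2 ∂ν = ∫⁻ y, g y ^ 2 ∂ν :=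
    lintegral_congr_ae (hfg.mono fun y hy ↦ by simp only [hy])
  simp_rw [hKf, hf2]
  set h : β → ℝ≥0∞ := fun y ↦ g y ^ 2 / q y
  have hh : Measurable h := (hg.pow_const 2).div hq
  calc ∫⁻ x, (∫⁻ y, K x y * g y ∂ν) ^ 2 ∂μ
      ≤ ∫⁻ x, (∫⁻ y, K x y * q y ∂ν) * ∫⁻ y, K x y * h y ∂ν ∂μ :=
        lintegral_mono fun x ↦ ENNReal.sq_lintegral_mul_le_weighted (by fun_prop) (by fun_prop)
          (by fun_prop) hq₀ hq_top
    _ ≤ ∫⁻ x, A * (p x * ∫⁻ y, K x y * h y ∂ν) ∂μ := by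
        refine lintegral_mono_ae (hA.mono fun x hx ↦ ?_)
        rw [← mul_assoc]
        gcongr
    _ = A * ∫⁻ x, ∫⁻ y, K x y * p x * h y ∂ν ∂μ := by
        rw [lintegral_const_mul _ (by fun_prop)]
        congr 1
        refine lintegral_congr fun x ↦ ?_
        rw [← lintegral_const_mul _ (by fun_prop)]
        exact lintegral_congr fun y ↦ by ring
    _ = A * ∫⁻ y, (∫⁻ x, K x y * p x ∂μ) * h y ∂ν := by
        rw [lintegral_lintegral_swap (by fun_prop)]
        congr 1
        exact lintegral_congr fun y ↦ lintegral_mul_const _ (by fun_prop)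
    _ ≤ A * ∫⁻ y, B * (q y * h y) ∂ν := by
        gcongr A * ?_
        refine lintegral_mono_ae (hB.mono fun y hy ↦ ?_)
        rw [← mul_assoc]
        gcongr
    _ = A * B * ∫⁻ y, g y ^ 2 ∂ν := by
        rw [mul_assoc, lintegral_const_mul _ (by fun_prop)]
        congr 2
        refine lintegral_congr_ae ?_
        filter_upwards [hq₀, hq_top] with y h₀ h_top
        exact ENNReal.mul_div_cancel h₀ h_top


theorem eLpNorm_two_le_of_lintegral_sq_le {ε ε' : Type*} [ENorm ε] [ENorm ε'] {f : α → ε}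
    {g : α → ε'} {c : ℝ≥0∞} (h : ∫⁻ a, ‖f a‖ₑ ^ 2 ∂μ ≤ c ^ 2 * ∫⁻ a, ‖g a‖ₑ ^ 2 ∂μ) :
    eLpNorm f 2 μ ≤ c * eLpNorm g 2 μ := by
  simp only [eLpNorm_eq_lintegral_rpow_enorm_toReal two_ne_zero ENNReal.ofNat_ne_top,
    ENNReal.toReal_ofNat, ENNReal.rpow_two]
  calc (∫⁻ a, ‖f a‖ₑ ^ 2 ∂μ) ^ (1 / 2 : ℝ)
      ≤ (c ^ 2 * ∫⁻ a, ‖g a‖ₑ ^ 2 ∂μ) ^ (1 / 2 : ℝ) := by gcongr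
    _ = c * (∫⁻ a, ‖g a‖ₑ ^ 2 ∂μ) ^ (1 / 2 : ℝ) := by
      rw [ENNReal.mul_rpow_of_nonneg _ _ (by norm_num), ← ENNReal.rpow_natCast,
        ← ENNReal.rpow_mul]
      norm_num

end

theorem lintegral_exp_neg_mul_mul_rpow_neg_half {b : ℝ} (hb : 0 < b) :
    ∫⁻ t in Ioi 0, ENNReal.ofReal (Real.exp (-(t * b))) * ENNReal.ofReal (t ^ (-(1 / 2 : ℝ)))
      = ENNReal.ofReal √Real.pi * ENNReal.ofReal (b ^ (-(1 / 2 : ℝ))) := by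
  have hgamma : ∫ t in Ioi 0, t ^ (1 / 2 - 1 : ℝ) * Real.exp (-(b * t))
      = √Real.pi * b ^ (-(1 / 2 : ℝ)) := by
    rw [Real.integral_rpow_mul_exp_neg_mul_Ioi one_half_pos hb, Real.Gamma_one_half_eq, one_div b,
      Real.inv_rpow hb.le, ← Real.rpow_neg hb.le, mul_comm]
  have hint : IntegrableOn (fun t : ℝ ↦ t ^ (1 / 2 - 1 : ℝ) * Real.exp (-(b * t))) (Ioi 0) := by
    have := integrableOn_rpow_mul_exp_neg_mul_rpow (p := 1) (s := 1 / 2 - 1) (by norm_num)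
      zero_lt_one hb
    simpa only [Real.rpow_one, neg_mul] using this
  rw [← ENNReal.ofReal_mul (Real.sqrt_nonneg _), ← hgamma,
    ofReal_integral_eq_lintegral_ofReal hint ?_]
  · refine setLIntegral_congr_fun measurableSet_Ioi fun t _ ↦ ?_
    rw [← ENNReal.ofReal_mul (Real.exp_nonneg _), mul_comm, mul_comm t b]
    norm_num
  · filter_upwards [ae_restrict_mem measurableSet_Ioi] with t (ht : 0 < t)
    positivity

theorem enorm_integral_cexp_neg_mul_le (μ : Measure ℝ) (φ : ℝ → ℂ) (x : ℝ) :
    ‖∫ r, Complex.exp (-(r * x)) * φ r ∂μ‖ₑ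
      ≤ ∫⁻ r, ENNReal.ofReal (Real.exp (-(r * x))) * ‖φ r‖ₑ ∂μ := by
  refine (enorm_integral_le_lintegral_enorm _).trans_eq (lintegral_congr fun r ↦ ?_)
  rw [enorm_mul, ← ofReal_norm, Complex.norm_exp]
  norm_cast

/-- (Hardy) The Laplace transform `L{φ}(x) = ∫₀^∞ e^{−r x} φ(r) dr` is bounded from
`L²(0, ∞)` to `L²(0, ∞)` with norm at most `√π`. -/
theorem stmt2 (φ : ℝ → ℂ) (hφ : MemLp φ 2 (volume.restrict (Set.Ioi (0 : ℝ)))) :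
    eLpNorm (fun x : ℝ => ∫ r in Set.Ioi (0 : ℝ), Complex.exp (-(r * x)) * φ r) 2
        (volume.restrict (Set.Ioi (0 : ℝ)))
      ≤ ENNReal.ofReal (Real.sqrt Real.pi) *
        eLpNorm φ 2 (volume.restrict (Set.Ioi (0 : ℝ))) := by
  set w : ℝ → ℝ≥0∞ := fun t ↦ ENNReal.ofReal (t ^ (-(1 / 2 : ℝ)))
  have hw₀ : ∀ᵐ t ∂volume.restrict (Ioi (0 : ℝ)), w t ≠ 0 := by
    filter_upwards [ae_restrict_mem measurableSet_Ioi] with t (ht : 0 < t)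
    exact (ENNReal.ofReal_pos.2 (Real.rpow_pos_of_pos ht _)).ne'
  have hA : ∀ᵐ x ∂volume.restrict (Ioi (0 : ℝ)),
      ∫⁻ r in Ioi 0, ENNReal.ofReal (Real.exp (-(r * x))) * w r ≤ ENNReal.ofReal √Real.pi * w x := by
    filter_upwards [ae_restrict_mem measurableSet_Ioi] with x (hx : 0 < x)
    exact (lintegral_exp_neg_mul_mul_rpow_neg_half hx).le
  have hB : ∀ᵐ r ∂volume.restrict (Ioi (0 : ℝ)),
      ∫⁻ x in Ioi 0, ENNReal.ofReal (Real.exp (-(r * x))) * w x ≤ ENNReal.ofReal √Real.pi * w r :=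
    hA.mono fun r hr ↦ by simpa only [mul_comm r] using hr
  refine eLpNorm_two_le_of_lintegral_sq_le ?_
  calc ∫⁻ x : ℝ in Ioi 0, ‖∫ r : ℝ in Ioi 0, Complex.exp (-(r * x)) * φ r‖ₑ ^ 2
      ≤ ∫⁻ x : ℝ in Ioi 0,
          (∫⁻ r : ℝ in Ioi 0, ENNReal.ofReal (Real.exp (-(r * x))) * ‖φ r‖ₑ) ^ 2 := by
        gcongr with x
        exact enorm_integral_cexp_neg_mul_le _ φ x
    _ ≤ ENNReal.ofReal √Real.pi * ENNReal.ofReal √Real.pi * ∫⁻ r in Ioi 0, ‖φ r‖ₑ ^ 2 :=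
        lintegral_sq_lintegral_mul_le_of_schur (by fun_prop) (by fun_prop) (by fun_prop) hw₀
          (ae_of_all _ fun _ ↦ ENNReal.ofReal_ne_top) hA hB hφ.1.enorm
    _ = _ := by rw [sq]
end

section
/- With ν₀ = k and ν± defined as the nontrivial symmetries of ω, one has the identity Im(ω(k)) = −β · Im(ν₀) · Im(ν₊) · Im(ν₋) · (1 + 3 [Im(w)]² / [Im(k)]²) whenever Im(k) ≠ 0 and w is the chosen square root; equivalently, off the real axis and off the branch cut, Im(ω(k)) < 0 if and only if Im(ν₀) Im(ν₊) Im(ν₋) > 0. -/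
/-! Write `k = x + iy` and `w = u + iv`. Then `Im ν₊ · Im ν₋ = (y² − 3u²)/4`, and the defining
equation of `w`, cleared of denominators, reads `(3βw)² = (3βk − α)² − 4(α² + 3βδ)`. Its imaginary
part gives `3βuv = y(3βx − α)` and its real part expresses `δ` through `x, y, u, v`; substituting into
`Im ω(k) = y(3βx² − βy² − 2αx − δ)` yields `4y Im ω(k) = −β(y² − 3u²)(y² + 3v²)`. The sign statement
follows because `β(1 + 3v²/y²)` is positive. -/

noncomputable def omegaC (β α δ : ℝ) (z : ℂ) : ℂ :=
  (β : ℂ) * z ^ 3 - (α : ℂ) * z ^ 2 - (δ : ℂ) * z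

noncomputable def nuPlus (β α : ℝ) (k w : ℂ) : ℂ :=
  -(1 / 2) * (k - (α : ℂ) / (β : ℂ)) + (Real.sqrt 3 / 2 : ℂ) * Complex.I * w

noncomputable def nuMinus (β α : ℝ) (k w : ℂ) : ℂ :=
  -(1 / 2) * (k - (α : ℂ) / (β : ℂ)) - (Real.sqrt 3 / 2 : ℂ) * Complex.I * w

section

variable {β α δ : ℝ} {k w : ℂ}

lemma omegaC_im (β α δ : ℝ) (k : ℂ) :
    (omegaC β α δ k).im = k.im * (3 * β * k.re ^ 2 - β * k.im ^ 2 - 2 * α * k.re - δ) := by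
  simp only [omegaC, pow_succ, pow_zero, one_mul, Complex.sub_im, Complex.mul_im,
    Complex.mul_re, Complex.ofReal_re, Complex.ofReal_im]
  ring

lemma nuPlus_im (β α : ℝ) (k w : ℂ) :
    (nuPlus β α k w).im = -k.im / 2 + √3 / 2 * w.re := by
  simp [nuPlus, div_eq_inv_mul]

lemma nuMinus_im (β α : ℝ) (k w : ℂ) :
    (nuMinus β α k w).im = -k.im / 2 - √3 / 2 * w.re := by
  simp [nuMinus, div_eq_inv_mul]

lemma nuPlus_im_mul_nuMinus_im (β α : ℝ) (k w : ℂ) :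
    (nuPlus β α k w).im * (nuMinus β α k w).im = (k.im ^ 2 - 3 * w.re ^ 2) / 4 := by
  rw [nuPlus_im, nuMinus_im]
  linear_combination (-w.re ^ 2 / 4) * Real.sq_sqrt (show (0 : ℝ) ≤ 3 by norm_num)

lemma sq_three_mul_eq (hβ : β ≠ 0)
    (hw : w ^ 2 = (k - (α : ℂ) / (3 * (β : ℂ))) ^ 2
        - (4 / (9 * (β : ℂ) ^ 2)) * ((α : ℂ) ^ 2 + 3 * (β : ℂ) * (δ : ℂ))) :
    (3 * β * w) ^ 2 = (3 * β * k - α) ^ 2 - 4 * (α ^ 2 + 3 * β * δ) := by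
  have : (β : ℂ) ≠ 0 := by exact_mod_cast hβ
  rw [mul_pow, hw]
  field_simp
  ring

lemma four_mul_im_mul_omegaC_im (hβ : β ≠ 0)
    (hw : (3 * β * w) ^ 2 = (3 * β * k - α) ^ 2 - 4 * (α ^ 2 + 3 * β * δ)) :
    4 * k.im * (omegaC β α δ k).im
      = -β * (k.im ^ 2 - 3 * w.re ^ 2) * (k.im ^ 2 + 3 * w.im ^ 2) := by
  have hre := congrArg Complex.re hw
  have him := congrArg Complex.im hw
  simp only [pow_two, Complex.mul_re, Complex.mul_im, Complex.sub_re, Complex.sub_im,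
    Complex.add_re, Complex.add_im, Complex.ofReal_re, Complex.ofReal_im, Complex.re_ofNat,
    Complex.im_ofNat] at hre him
  have hcross : 3 * β * (w.re * w.im) = k.im * (3 * β * k.re - α) := by
    apply mul_left_cancel₀ (mul_ne_zero (by norm_num : (6 : ℝ) ≠ 0) hβ)
    linear_combination him
  apply mul_left_cancel₀ (mul_ne_zero (by norm_num : (3 : ℝ) ≠ 0) hβ)
  rw [omegaC_im]
  linear_combination (-k.im ^ 2) * hre
    + (-3 * (k.im * (3 * β * k.re - α) + 3 * β * (w.re * w.im))) * hcross

lemma omegaC_im_eq (hβ : β ≠ 0)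
    (hw : (3 * β * w) ^ 2 = (3 * β * k - α) ^ 2 - 4 * (α ^ 2 + 3 * β * δ)) :
    (omegaC β α δ k).im = -β * k.im * (nuPlus β α k w).im * (nuMinus β α k w).im
      * (1 + 3 * w.im ^ 2 / k.im ^ 2) := by
  rcases eq_or_ne k.im 0 with hy | hy
  · simp [omegaC_im, hy]
  rw [mul_assoc (-β * k.im), nuPlus_im_mul_nuMinus_im]
  field_simp
  linear_combination four_mul_im_mul_omegaC_im hβ hw

end

theorem stmt5_general (β α δ : ℝ) (hβ : 0 < β) (k w : ℂ)
    (hw : w ^ 2 = (k - (α : ℂ) / (3 * (β : ℂ))) ^ 2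
        - (4 / (9 * (β : ℂ) ^ 2)) * ((α : ℂ) ^ 2 + 3 * (β : ℂ) * (δ : ℂ))) :
    (omegaC β α δ k).im =
      -β * k.im * (nuPlus β α k w).im * (nuMinus β α k w).im
        * (1 + 3 * w.im ^ 2 / k.im ^ 2) ∧
    ((omegaC β α δ k).im < 0 ↔
      0 < k.im * (nuPlus β α k w).im * (nuMinus β α k w).im) := by
  have h := omegaC_im_eq hβ.ne' (sq_three_mul_eq hβ.ne' hw)
  refine ⟨h, ?_⟩
  have hpos : 0 < β * (1 + 3 * w.im ^ 2 / k.im ^ 2) := by positivity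
  rw [h, show ∀ a b c d e : ℝ, -a * b * c * d * e = -(a * e * (b * c * d)) by intros; ring,
    neg_lt_zero]
  exact mul_pos_iff_of_pos_left hpos

/-- Off the real axis, `Im ω(k) = −β Im(ν₀) Im(ν₊) Im(ν₋) (1 + 3 Im(w)²/Im(k)²)`;
in particular `Im ω(k) < 0` iff `Im(ν₀) Im(ν₊) Im(ν₋) > 0`. -/
theorem stmt5 (β α δ : ℝ) (hβ : 0 < β) (k w : ℂ) (hk : k.im ≠ 0)
    (hw : w ^ 2 = (k - (α : ℂ) / (3 * (β : ℂ))) ^ 2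
        - (4 / (9 * (β : ℂ) ^ 2)) * ((α : ℂ) ^ 2 + 3 * (β : ℂ) * (δ : ℂ))) :
    (omegaC β α δ k).im =
      -β * k.im * (nuPlus β α k w).im * (nuMinus β α k w).im
        * (1 + 3 * w.im ^ 2 / k.im ^ 2) ∧
    ((omegaC β α δ k).im < 0 ↔
      0 < k.im * (nuPlus β α k w).im * (nuMinus β α k w).im) :=
  stmt5_general β α δ hβ k w hw
end

section
/- (Mean value identity for the power nonlinearity) For any complex numbers u₁, u₂ and any real λ ≥ 1, one has |u₁|^{λ−1} u₁ − |u₂|^{λ−1} u₂ = ((λ+1)/2) (∫₀¹ |Z_τ|^{λ−1} dτ)(u₁ − u₂) + ((λ−1)/2) (∫₀¹ |Z_τ|^{λ−3} Z_τ² dτ) · conj(u₁ − u₂), where Z_τ = τ u₁ + (1 − τ) u₂. -/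
/-!
For `p > 0` the map `F z = |z|^p z` is real-differentiable on `ℂ`, with
`dF(z) w = |z|^p w + p |z|^(p-2) ⟪z, w⟫ z = ((p+2)/2) |z|^p w + (p/2) |z|^(p-2) z² w̄`
(at `z = 0` the derivative vanishes because `|F z| = |z|^(p+1)`). The identity, with `p = λ - 1`,
is the fundamental theorem of calculus for `F` along the segment `τ ↦ Z_τ`; both integrands are
continuous since `|z|^(p-2) z²` has modulus `|z|^p`. For `λ = 1` both sides are `u₁ - u₂`.
-/

open Asymptotics Filter Topology ComplexConjugate
open scoped InnerProductSpace

section InnerProductSpace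

variable {E : Type*} [NormedAddCommGroup E] [InnerProductSpace ℝ E]

theorem hasStrictFDerivAt_norm_rpow_of_ne_zero {x : E} (hx : x ≠ 0) (p : ℝ) :
    HasStrictFDerivAt (fun x : E ↦ ‖x‖ ^ p) ((p * ‖x‖ ^ (p - 2)) • innerSL ℝ x) x := by
  convert (hasStrictFDerivAt_norm_sq x).rpow_const (p := p / 2) (by simp [hx]) using 1
  · ext y
    rw [← Real.rpow_natCast_mul (norm_nonneg _)]
    ring_nf
  · simp_rw [← Real.rpow_natCast_mul (norm_nonneg _), ← Nat.cast_smul_eq_nsmul ℝ, smul_smul]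
    ring_nf

theorem hasFDerivAt_norm_rpow_smul (x : E) {p : ℝ} (hp : 0 < p) :
    HasFDerivAt (fun x : E ↦ ‖x‖ ^ p • x)
      (‖x‖ ^ p • ContinuousLinearMap.id ℝ E
        + (p * ‖x‖ ^ (p - 2)) • (innerSL ℝ x).smulRight x) x := by
  rcases eq_or_ne x 0 with rfl | hx
  · simp only [norm_zero, Real.zero_rpow hp.ne', zero_smul, map_zero]
    refine .of_isLittleO ?_
    have hsmall : (fun x : E ↦ ‖x‖ ^ p) =o[𝓝 0] (fun _ ↦ (1 : ℝ)) := by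
      rw [isLittleO_one_iff]
      simpa [Real.zero_rpow hp.ne'] using
        (continuous_norm.rpow_const fun _ ↦ Or.inr hp.le).tendsto (0 : E)
    simpa using hsmall.smul_isBigO (isBigO_refl (fun x : E ↦ x) (𝓝 0))
  · exact ((hasStrictFDerivAt_norm_rpow_of_ne_zero hx p).hasFDerivAt.smul
      (hasFDerivAt_id x)).congr_fderiv (by ext; simp [smul_smul])

end InnerProductSpace

namespace Complex

theorem norm_rpow_smul_add_inner_smul_eq (z w : ℂ) {p : ℝ} (hp : p ≠ 0) :
    ‖z‖ ^ p • w + (p * ‖z‖ ^ (p - 2) * ⟪z, w⟫_ℝ) • z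
      = (((p + 2) / 2 : ℝ) : ℂ) * ((‖z‖ ^ p : ℝ) : ℂ) * w
        + ((p / 2 : ℝ) : ℂ) * (((‖z‖ ^ (p - 2) : ℝ) : ℂ) * z ^ 2) * conj w := by
  have hnorm : ((‖z‖ ^ p : ℝ) : ℂ) = ((‖z‖ ^ (p - 2) : ℝ) : ℂ) * (z * conj z) := by
    rw [mul_conj, normSq_eq_norm_sq, ← ofReal_mul, ← Real.rpow_two,
      ← Real.rpow_add' (norm_nonneg _) (by simpa)]
    norm_num
  rw [Complex.inner, real_smul, real_smul, ofReal_mul, ofReal_mul, re_eq_add_conj, hnorm]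
  simp only [map_mul, conj_conj, ofReal_div, ofReal_add, ofReal_ofNat]
  ring

theorem _root_.HasDerivAt.ofReal_norm_rpow_mul {γ : ℝ → ℂ} {w : ℂ} {t : ℝ}
    (hγ : HasDerivAt γ w t) {p : ℝ} (hp : 0 < p) :
    HasDerivAt (fun t ↦ ((‖γ t‖ ^ p : ℝ) : ℂ) * γ t)
      ((((p + 2) / 2 : ℝ) : ℂ) * ((‖γ t‖ ^ p : ℝ) : ℂ) * w
        + ((p / 2 : ℝ) : ℂ) * (((‖γ t‖ ^ (p - 2) : ℝ) : ℂ) * γ t ^ 2) * conj w) t := by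
  have h := (hasFDerivAt_norm_rpow_smul (γ t) hp).comp_hasDerivAt t hγ
  simp only [Function.comp_def, real_smul] at h
  refine h.congr_deriv ?_
  rw [← norm_rpow_smul_add_inner_smul_eq _ _ hp.ne']
  simp only [add_apply, smul_apply, ContinuousLinearMap.id_apply,
    ContinuousLinearMap.smulRight_apply, innerSL_apply_apply, smul_smul]

theorem continuous_ofReal_norm_rpow_sub_two_mul_sq {p : ℝ} (hp : 0 < p) :
    Continuous fun z : ℂ ↦ ((‖z‖ ^ (p - 2) : ℝ) : ℂ) * z ^ 2 := by
  rw [continuous_iff_continuousAt]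
  intro z
  rcases eq_or_ne z 0 with rfl | hz
  · have hnorm (z : ℂ) : ‖((‖z‖ ^ (p - 2) : ℝ) : ℂ) * z ^ 2‖ = ‖z‖ ^ p := by
      rw [norm_mul, norm_real, norm_pow, Real.norm_of_nonneg (by positivity), ← Real.rpow_two,
        ← Real.rpow_add' (norm_nonneg _) (by simpa using hp.ne'), sub_add_cancel]
    have hlim := (continuous_norm.rpow_const fun _ ↦ Or.inr hp.le).tendsto (0 : ℂ)
    simp only [norm_zero, Real.zero_rpow hp.ne'] at hlim
    rw [ContinuousAt, zero_pow two_ne_zero, mul_zero, tendsto_zero_iff_norm_tendsto_zero]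
    simpa only [hnorm] using hlim
  · exact ((continuous_ofReal.continuousAt.comp
      (continuous_norm.continuousAt.rpow_const (.inl (norm_ne_zero_iff.mpr hz))))).mul
      (continuous_pow 2).continuousAt

open MeasureTheory in
theorem norm_rpow_mul_sub_eq_integral (u₁ u₂ : ℂ) {p : ℝ} (hp : 0 < p) :
    ((‖u₁‖ ^ p : ℝ) : ℂ) * u₁ - ((‖u₂‖ ^ p : ℝ) : ℂ) * u₂ =
      (((p + 2) / 2 : ℝ) : ℂ) *
          (∫ τ in (0 : ℝ)..1, ((‖(τ : ℂ) * u₁ + (1 - (τ : ℂ)) * u₂‖ ^ p : ℝ) : ℂ)) *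
          (u₁ - u₂)
        + ((p / 2 : ℝ) : ℂ) *
          (∫ τ in (0 : ℝ)..1,
            ((‖(τ : ℂ) * u₁ + (1 - (τ : ℂ)) * u₂‖ ^ (p - 2) : ℝ) : ℂ) *
              ((τ : ℂ) * u₁ + (1 - (τ : ℂ)) * u₂) ^ 2) *
          conj (u₁ - u₂) := by
  set γ : ℝ → ℂ := fun τ ↦ (τ : ℂ) * u₁ + (1 - (τ : ℂ)) * u₂
  have hγ (τ : ℝ) : HasDerivAt γ (u₁ - u₂) τ := by
    have h := ((hasDerivAt_id τ).ofReal_comp.mul_const u₁).add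
      (((hasDerivAt_id τ).ofReal_comp.const_sub 1).mul_const u₂)
    exact h.congr_deriv (by simp [sub_eq_add_neg])
  have hγc : Continuous γ := by fun_prop
  have hA : IntervalIntegrable (fun τ ↦ ((‖γ τ‖ ^ p : ℝ) : ℂ)) volume 0 1 :=
    (continuous_ofReal.comp (hγc.norm.rpow_const fun _ ↦ .inr hp.le)).intervalIntegrable _ _
  have hB : IntervalIntegrable (fun τ ↦ ((‖γ τ‖ ^ (p - 2) : ℝ) : ℂ) * γ τ ^ 2) volume 0 1 :=
    ((continuous_ofReal_norm_rpow_sub_two_mul_sq hp).comp hγc).intervalIntegrable _ _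
  have hftc := intervalIntegral.integral_eq_sub_of_hasDerivAt
    (fun τ _ ↦ (hγ τ).ofReal_norm_rpow_mul hp)
    (((hA.const_mul _).mul_const _).add ((hB.const_mul _).mul_const _))
  rw [intervalIntegral.integral_add ((hA.const_mul _).mul_const _) ((hB.const_mul _).mul_const _),
    intervalIntegral.integral_mul_const, intervalIntegral.integral_mul_const,
    intervalIntegral.integral_const_mul, intervalIntegral.integral_const_mul] at hftc
  simpa [γ] using hftc.symm

end Complex

/-- Mean value identity for the power nonlinearity: for `u₁, u₂ ∈ ℂ` and real `λ ≥ 1`,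
`|u₁|^{λ−1}u₁ − |u₂|^{λ−1}u₂ = ((λ+1)/2)(∫₀¹ |Z_τ|^{λ−1} dτ)(u₁−u₂)
  + ((λ−1)/2)(∫₀¹ |Z_τ|^{λ−3} Z_τ² dτ) conj(u₁−u₂)`, where `Z_τ = τu₁ + (1−τ)u₂`. -/
theorem stmt10 (lam : ℝ) (hlam : 1 ≤ lam) (u₁ u₂ : ℂ) :
    ((‖u₁‖ ^ (lam - 1) : ℝ) : ℂ) * u₁
        - ((‖u₂‖ ^ (lam - 1) : ℝ) : ℂ) * u₂ =
      (((lam + 1) / 2 : ℝ) : ℂ) *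
          (∫ τ in (0 : ℝ)..1,
            ((‖(τ : ℂ) * u₁ + (1 - (τ : ℂ)) * u₂‖ ^ (lam - 1) : ℝ) : ℂ)) *
          (u₁ - u₂)
        + (((lam - 1) / 2 : ℝ) : ℂ) *
          (∫ τ in (0 : ℝ)..1,
            ((‖(τ : ℂ) * u₁ + (1 - (τ : ℂ)) * u₂‖ ^ (lam - 3) : ℝ) : ℂ) *
              ((τ : ℂ) * u₁ + (1 - (τ : ℂ)) * u₂) ^ 2) *
          (starRingEnd ℂ) (u₁ - u₂) := by
  rcases hlam.eq_or_lt with rfl | hlam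
  · norm_num [intervalIntegral.integral_const]
  · have h := Complex.norm_rpow_mul_sub_eq_integral u₁ u₂ (sub_pos.mpr hlam)
    rwa [show lam - 1 + 2 = lam + 1 by ring, show lam - 1 - 2 = lam - 3 by ring] at h
end

section
/- (Lower bound for Im(ν₀) in the closure of D₀ beyond the branch points) If k ∈ closure(D₀) and |k − α/(3β)| ≥ (2√2/(√3 β)) √|α² + 3βδ|, then Im(k) ≥ (√23/(4√2)) · |k − α/(3β)|. -/
/-!
Shifting to the inflection point `c = α/(3β)` removes the quadratic term:
`ω(c + w) = β w³ - p w + ω(c)` with `p = (α² + 3βδ)/(3β)` and `ω(c)` real. As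
`Im (w³) = Im w · (3|w|² - 4 (Im w)²)`, on `D₀` the condition `Im ω < 0` becomes
`β (3|w|² - 4 (Im w)²) < p`, whose non-strict form persists on the closure.
Far from `c` we have `8|p| ≤ β|w|²`, hence `4 (Im w)² ≥ (3 - 1/8)|w|²`,
i.e. `(Im w)² ≥ 23/32 · |w|²`.
-/

open Complex

lemma Complex.im_pow_three (w : ℂ) : (w ^ 3).im = w.im * (3 * ‖w‖ ^ 2 - 4 * w.im ^ 2) := by
  rw [Complex.sq_norm, Complex.normSq_apply]
  simp only [pow_succ, pow_zero, one_mul, mul_im, mul_re]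
  ring

section Cubic

variable {β : ℝ} (α δ : ℝ)

lemma cubic_eq_depressed (hβ : β ≠ 0) (z : ℂ) :
    (β : ℂ) * z ^ 3 - α * z ^ 2 - δ * z =
      β * (z - (α / (3 * β) : ℝ)) ^ 3
        - ((α ^ 2 + 3 * β * δ) / (3 * β) : ℝ) * (z - (α / (3 * β) : ℝ))
        + (β * (α / (3 * β)) ^ 3 - α * (α / (3 * β)) ^ 2 - δ * (α / (3 * β)) : ℝ) := by
  have : (β : ℂ) ≠ 0 := ofReal_ne_zero.mpr hβ
  push_cast
  field_simp
  ring

lemma im_cubic (hβ : β ≠ 0) (z : ℂ) :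
    ((β : ℂ) * z ^ 3 - α * z ^ 2 - δ * z).im =
      z.im * (β * (3 * ‖z - (α / (3 * β) : ℝ)‖ ^ 2 - 4 * z.im ^ 2)
        - (α ^ 2 + 3 * β * δ) / (3 * β)) := by
  rw [cubic_eq_depressed α δ hβ, add_im, sub_im, im_ofReal_mul, im_ofReal_mul, ofReal_im,
    Complex.im_pow_three, sub_im, ofReal_im, sub_zero]
  ring

lemma closure_setOf_im_cubic_neg_subset (hβ : β ≠ 0) :
    closure {z : ℂ | ((β : ℂ) * z ^ 3 - α * z ^ 2 - δ * z).im < 0 ∧ 0 < z.im} ⊆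
      {z : ℂ | β * (3 * ‖z - (α / (3 * β) : ℝ)‖ ^ 2 - 4 * z.im ^ 2)
        ≤ (α ^ 2 + 3 * β * δ) / (3 * β) ∧ 0 ≤ z.im} := by
  refine closure_minimal ?_ ?_
  · rintro z ⟨hω, hz⟩
    rw [im_cubic α δ hβ] at hω
    exact ⟨by nlinarith, hz.le⟩
  · rw [Set.ofPred_and]
    exact (isClosed_le (by fun_prop) (by fun_prop)).inter
      (isClosed_le (by fun_prop) (by fun_prop))

end Cubic

lemma eight_mul_abs_div_le_mul_sq {β A r : ℝ} (hβ : 0 < β)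
    (hr : 2 * Real.sqrt 2 / (Real.sqrt 3 * β) * Real.sqrt |A| ≤ r) :
    8 * |A / (3 * β)| ≤ β * r ^ 2 := by
  have hsq : 8 * |A| / (3 * β ^ 2) ≤ r ^ 2 := by
    calc 8 * |A| / (3 * β ^ 2)
        = (2 * Real.sqrt 2 / (Real.sqrt 3 * β) * Real.sqrt |A|) ^ 2 := by
          rw [mul_pow, div_pow, mul_pow, mul_pow, Real.sq_sqrt (by norm_num),
            Real.sq_sqrt (by norm_num), Real.sq_sqrt (abs_nonneg A)]
          ring
      _ ≤ r ^ 2 := pow_le_pow_left₀ (by positivity) hr 2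
  rw [abs_div, abs_of_pos (by positivity : (0 : ℝ) < 3 * β)]
  calc 8 * (|A| / (3 * β)) = β * (8 * |A| / (3 * β ^ 2)) := by field_simp
    _ ≤ β * r ^ 2 := by gcongr

lemma sqrt_23_div_mul_le {β q r y : ℝ} (hβ : 0 < β) (hy : 0 ≤ y)
    (h : β * (3 * r ^ 2 - 4 * y ^ 2) ≤ q) (hq : 8 * |q| ≤ β * r ^ 2) :
    Real.sqrt 23 / (4 * Real.sqrt 2) * r ≤ y := by
  have hy2 : 23 / 32 * r ^ 2 ≤ y ^ 2 := by nlinarith [le_abs_self q]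
  refine le_of_sq_le_sq ?_ hy
  rw [mul_pow, div_pow, mul_pow, Real.sq_sqrt (by norm_num), Real.sq_sqrt (by norm_num)]
  linarith

/-- Lower bound for `Im(ν₀) = Im k` on the closure of `D₀` beyond the branch points:
if `k ∈ closure D₀` and `|k − α/(3β)| ≥ (2√2/(√3 β))√|α² + 3βδ|`, then
`Im k ≥ (√23/(4√2)) |k − α/(3β)|`. -/
theorem stmt16 (β α δ : ℝ) (hβ : 0 < β) (k : ℂ)
    (hk : k ∈ closure {z : ℂ |
      ((β : ℂ) * z ^ 3 - (α : ℂ) * z ^ 2 - (δ : ℂ) * z).im < 0 ∧ 0 < z.im})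
    (hfar : 2 * Real.sqrt 2 / (Real.sqrt 3 * β) * Real.sqrt |α ^ 2 + 3 * β * δ| ≤
      ‖k - (α : ℂ) / (3 * (β : ℂ))‖) :
    Real.sqrt 23 / (4 * Real.sqrt 2) * ‖k - (α : ℂ) / (3 * (β : ℂ))‖ ≤
      k.im := by
  have hc : (α : ℂ) / (3 * (β : ℂ)) = ((α / (3 * β) : ℝ) : ℂ) := by push_cast; rfl
  rw [hc] at hfar ⊢
  obtain ⟨hbound, him⟩ := closure_setOf_im_cubic_neg_subset α δ hβ.ne' hk
  exact sqrt_23_div_mul_le hβ him hbound (eight_mul_abs_div_le_mul_sq hβ hfar)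
end

section
/- (Exponential lower bound for the denominator Δ) There exists a constant c > 0 (depending on α, β, δ, ℓ) such that for every n ∈ {0, +, −} and every k in the closure of D_n with |k − α/(3β)| ≥ R_Δ, where R_Δ = max{ (2√2/(√3β))√|α²+3βδ|, 9/ℓ }, one has |e^{i ν_n ℓ} Δ(k)| ≥ c |k − α/(3β)|, where Δ(k) = (ν₊ − ν₋) e^{−i k ℓ} + (ν₋ − k) e^{−i ν₊ ℓ} + (k − ν₊) e^{−i ν₋ ℓ}. -/
/-- The denominator `Δ(k)` of the unified transform solution formula. -/
noncomputable def DeltaFun (β α ℓ : ℝ) (k w : ℂ) : ℂ :=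
  (nuPlus β α k w - nuMinus β α k w) * Complex.exp (-Complex.I * k * (ℓ : ℂ))
    + (nuMinus β α k w - k) * Complex.exp (-Complex.I * nuPlus β α k w * (ℓ : ℂ))
    + (k - nuPlus β α k w) * Complex.exp (-Complex.I * nuMinus β α k w * (ℓ : ℂ))

def D0 (β α δ : ℝ) : Set ℂ := {k : ℂ | (omegaC β α δ k).im < 0 ∧ 0 < k.im}

def Dp (β α δ : ℝ) : Set ℂ :=
  {k : ℂ | (omegaC β α δ k).im < 0 ∧ k.im < 0 ∧ 0 < (k - (α : ℂ) / (3 * (β : ℂ))).re}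

def Dm (β α δ : ℝ) : Set ℂ :=
  {k : ℂ | (omegaC β α δ k).im < 0 ∧ k.im < 0 ∧ (k - (α : ℂ) / (3 * (β : ℂ))).re < 0}

/-! Write `ζ = k - α/(3β)`. Once `|ζ| ≥ R_Δ` the branch condition forces `|w - ζ| ≤ |ζ|/8`, so
`k, ν₊, ν₋` lie close to the equilateral triangle `α/(3β) + ζ·{1, e^{2πi/3}, e^{-2πi/3}}`, whose
sides have length `√3 |ζ|`. Multiplying `Δ` by `e^{iν_n ℓ}` leaves the side opposite `ν_n` plus the
two other sides times `e^{i(ν_n - ν)ℓ}`. On the closure of `D_n` the vertex `ν_n` is higher than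
the other two by at least `|ζ|/4`, and `|ζ| ℓ ≥ 9`, so these exponentials are at most `e^{-9/4}`
and the first term dominates. -/

open Complex

noncomputable def delta3 (ℓ : ℝ) (x y z : ℂ) : ℂ :=
  (y - z) * exp (-I * x * ℓ) + (z - x) * exp (-I * y * ℓ) + (x - y) * exp (-I * z * ℓ)

section Delta3

variable {ℓ : ℝ} {x y z : ℂ}

lemma delta3_rotate : delta3 ℓ x y z = delta3 ℓ y z x := by
  unfold delta3; ring

lemma exp_mul_delta3 :
    exp (I * x * ℓ) * delta3 ℓ x y z
      = (y - z) + (z - x) * exp (I * (x - y) * ℓ) + (x - y) * exp (I * (x - z) * ℓ) := by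
  have hsplit : ∀ u : ℂ, exp (I * (x - u) * ℓ) = exp (I * x * ℓ) * exp (-I * u * ℓ) := by
    intro u; rw [← exp_add]; ring_nf
  have hx : exp (I * x * ℓ) * exp (-I * x * ℓ) = 1 := by
    rw [← exp_add, ← exp_zero]; ring_nf
  rw [hsplit, hsplit, delta3]
  linear_combination (y - z) * hx

lemma norm_exp_I_mul_mul_ofReal (g : ℂ) : ‖exp (I * g * ℓ)‖ = Real.exp (-(g.im * ℓ)) := by
  simp [norm_exp, mul_re, mul_im]

lemma le_norm_exp_mul_delta3 {a b t : ℝ} (ha : a ≤ ‖y - z‖) (hy : ‖x - y‖ ≤ b)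
    (hz : ‖x - z‖ ≤ b) (hty : t ≤ (x - y).im * ℓ) (htz : t ≤ (x - z).im * ℓ) :
    a - 2 * b * Real.exp (-t) ≤ ‖exp (I * x * ℓ) * delta3 ℓ x y z‖ := by
  have hterm : ∀ c g : ℂ, ‖c‖ ≤ b → t ≤ g.im * ℓ → ‖c * exp (I * g * ℓ)‖ ≤ b * Real.exp (-t) := by
    intro c g hc hg
    rw [norm_mul, norm_exp_I_mul_mul_ofReal]
    exact mul_le_mul hc (Real.exp_le_exp.mpr (neg_le_neg hg)) (Real.exp_pos _).le
      ((norm_nonneg _).trans hc)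
  set B := (z - x) * exp (I * (x - y) * ℓ)
  set C := (x - y) * exp (I * (x - z) * ℓ)
  have hB : ‖B‖ ≤ b * Real.exp (-t) := hterm _ _ (by rwa [norm_sub_rev]) hty
  have hC : ‖C‖ ≤ b * Real.exp (-t) := hterm _ _ hy htz
  have htri : ‖y - z‖ ≤ ‖y - z + B + C‖ + ‖B‖ + ‖C‖ := by
    calc ‖y - z‖ = ‖y - z + B + C - B - C‖ := by ring_nf
      _ ≤ _ := (norm_sub_le _ _).trans (add_le_add_left (norm_sub_le _ _) _)
  rw [exp_mul_delta3]
  linarith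

lemma half_le_norm_exp_mul_delta3 {s : ℝ} (hℓ : 0 < ℓ) (hsℓ : 9 ≤ s * ℓ)
    (hyz : 3 / 2 * s ≤ ‖y - z‖) (hy : ‖x - y‖ ≤ 2 * s) (hz : ‖x - z‖ ≤ 2 * s)
    (hty : s / 4 ≤ (x - y).im) (htz : s / 4 ≤ (x - z).im) :
    1 / 2 * s ≤ ‖exp (I * x * ℓ) * delta3 ℓ x y z‖ := by
  have hs : 0 ≤ s := by linarith [norm_nonneg (x - y)]
  have hexp : Real.exp (-(9 / 4)) ≤ 1 / 4 := by
    rw [Real.exp_neg, one_div]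
    refine inv_anti₀ (by norm_num) ?_
    linarith [Real.quadratic_le_exp_of_nonneg (x := 9 / 4) (by norm_num)]
  have hℓt : ∀ g : ℂ, s / 4 ≤ g.im → 9 / 4 ≤ g.im * ℓ := fun g hg => by
    nlinarith [mul_le_mul_of_nonneg_right hg hℓ.le]
  calc 1 / 2 * s ≤ 3 / 2 * s - 2 * (2 * s) * Real.exp (-(9 / 4)) := by nlinarith
    _ ≤ _ := le_norm_exp_mul_delta3 hyz hy hz (hℓt _ hty) (hℓt _ htz)

end Delta3

lemma div_eq_three_mul_div_three_mul {K : Type*} [Field K] [CharZero K] (a b : K) :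
    a / b = 3 * (a / (3 * b)) := by
  rw [← mul_div_assoc, mul_div_mul_left _ _ three_ne_zero]

lemma abs_re_sub_re_le (z w : ℂ) : |z.re - w.re| ≤ ‖z - w‖ := by
  rw [← sub_re]; exact abs_re_le_norm _

lemma sqrt_three_bounds : 173 / 100 ≤ √3 ∧ √3 ≤ 7 / 4 := by
  constructor
  · rw [Real.le_sqrt (by norm_num) (by norm_num)]; norm_num
  · rw [Real.sqrt_le_left (by norm_num)]; norm_num

open ComplexConjugate

section Branch

variable {ζ w : ℂ}

lemma norm_sub_le_of_sq_eq_sub {μ : ℝ} (hw : w ^ 2 = ζ ^ 2 - μ)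
    (hbr : 0 ≤ (w * conj ζ).re) (hμ : |μ| ≤ ‖ζ‖ ^ 2 / 6) : ‖w - ζ‖ ≤ ‖ζ‖ / 8 := by
  rcases (norm_nonneg ζ).eq_or_lt with hζ | hζ
  · have hμ0 : (μ : ℂ) = 0 := by
      rw [ofReal_eq_zero, ← abs_nonpos_iff]; simpa [← hζ] using hμ
    have hζ0 : ζ = 0 := norm_eq_zero.mp hζ.symm
    have hw0 : w = 0 := by simpa [hζ0, hμ0] using hw
    simp [hw0, hζ0]
  have hprod : ‖w - ζ‖ * ‖w + ζ‖ = |μ| := by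
    rw [← norm_mul, show (w - ζ) * (w + ζ) = -μ by linear_combination hw, norm_neg, norm_real,
      Real.norm_eq_abs]
  have hw2 : ‖ζ‖ ^ 2 ≤ ‖w‖ ^ 2 + |μ| := by
    have := norm_add_le (w ^ 2) μ
    rwa [norm_pow, norm_real, Real.norm_eq_abs, hw, sub_add_cancel, norm_pow] at this
  have hsum : ‖w‖ ^ 2 + ‖ζ‖ ^ 2 ≤ ‖w + ζ‖ ^ 2 := by
    rw [Complex.sq_norm, Complex.sq_norm, Complex.sq_norm, normSq_add]; linarith
  have hsum' : 4 / 3 * ‖ζ‖ ≤ ‖w + ζ‖ := by nlinarith [norm_nonneg (w + ζ)]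
  nlinarith [norm_nonneg (w - ζ)]

lemma norm_bounds_of_norm_sub_le {s : ℝ} {z c : ℂ} (hc : ‖c‖ = √3 * s)
    (hz : ‖z - c‖ ≤ √3 * s / 8) : 3 / 2 * s ≤ ‖z‖ ∧ ‖z‖ ≤ 2 * s := by
  obtain ⟨h3l, h3u⟩ := sqrt_three_bounds
  have hs : 0 ≤ s := nonneg_of_mul_nonneg_right (hc ▸ norm_nonneg c) (by positivity)
  have h1 := norm_sub_norm_le c (c - z)
  have h2 := norm_le_insert' z c
  rw [sub_sub_cancel, norm_sub_rev] at h1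
  constructor <;> nlinarith

lemma norm_bounds_of_near_equilateral (h : ‖w - ζ‖ ≤ ‖ζ‖ / 8) :
    (3 / 2 * ‖ζ‖ ≤ ‖3 / 2 * ζ - √3 / 2 * I * w‖ ∧ ‖3 / 2 * ζ - √3 / 2 * I * w‖ ≤ 2 * ‖ζ‖) ∧
    (3 / 2 * ‖ζ‖ ≤ ‖3 / 2 * ζ + √3 / 2 * I * w‖ ∧ ‖3 / 2 * ζ + √3 / 2 * I * w‖ ≤ 2 * ‖ζ‖) ∧
    (3 / 2 * ‖ζ‖ ≤ ‖√3 * I * w‖ ∧ ‖√3 * I * w‖ ≤ 2 * ‖ζ‖) := by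
  have h3 : (0 : ℝ) ≤ √3 := Real.sqrt_nonneg 3
  have hrot : ∀ σ : ℝ, σ ^ 2 = 1 → ‖(3 / 2 + σ * (√3 / 2) * I) * ζ‖ = √3 * ‖ζ‖ := by
    intro σ hσ
    rw [norm_mul, show (3 / 2 + σ * (√3 / 2) * I : ℂ) = ((3 / 2 : ℝ) : ℂ) + ((σ * (√3 / 2) : ℝ)) * I
      by push_cast; ring, norm_add_mul_I]
    congr 1
    rw [Real.sqrt_eq_iff_mul_self_eq (by positivity) h3]
    nlinarith [Real.sq_sqrt (show (0 : ℝ) ≤ 3 by norm_num)]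
  have herr : ∀ c : ℝ, |c| ≤ √3 → ‖c * I * (w - ζ)‖ ≤ √3 * ‖ζ‖ / 8 := by
    intro c hc
    rw [norm_mul, norm_mul, norm_I, mul_one, norm_real, Real.norm_eq_abs]
    nlinarith [mul_le_mul hc h (norm_nonneg _) h3]
  refine ⟨norm_bounds_of_norm_sub_le (hrot (-1) (by norm_num)) ?_,
    norm_bounds_of_norm_sub_le (hrot 1 (by norm_num)) ?_,
    norm_bounds_of_norm_sub_le (c := √3 * I * ζ) (by simp) ?_⟩
  · rw [show 3 / 2 * ζ - √3 / 2 * I * w - (3 / 2 + ((-1 : ℝ) : ℂ) * (√3 / 2) * I) * ζ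
      = ((-(√3 / 2) : ℝ) : ℂ) * I * (w - ζ) by push_cast; ring]
    exact herr _ (by rw [abs_neg, abs_of_nonneg (by positivity)]; linarith)
  · rw [show 3 / 2 * ζ + √3 / 2 * I * w - (3 / 2 + ((1 : ℝ) : ℂ) * (√3 / 2) * I) * ζ
      = ((√3 / 2 : ℝ) : ℂ) * I * (w - ζ) by push_cast; ring]
    exact herr _ (by rw [abs_of_nonneg (by positivity)]; linarith)
  · rw [show √3 * I * w - √3 * I * ζ = ((√3 : ℝ) : ℂ) * I * (w - ζ) by ring]
    exact herr _ (abs_of_nonneg h3).le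

end Branch

section Symmetries

variable {β α δ ℓ : ℝ} {k w : ℂ}

local notation "ζ" => k - (α : ℂ) / (3 * (β : ℂ))
local notation "μ" => 4 * (α ^ 2 + 3 * β * δ) / (9 * β ^ 2)

lemma DeltaFun_eq_delta3 :
    DeltaFun β α ℓ k w = delta3 ℓ k (nuPlus β α k w) (nuMinus β α k w) := rfl

lemma im_sub_div : (ζ).im = k.im := by
  simp [div_im]

lemma nuPlus_sub_nuMinus : nuPlus β α k w - nuMinus β α k w = √3 * I * w := by
  unfold nuPlus nuMinus; ring

lemma sub_nuPlus : k - nuPlus β α k w = 3 / 2 * ζ - √3 / 2 * I * w := by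
  rw [nuPlus, div_eq_three_mul_div_three_mul (α : ℂ)]; ring

lemma sub_nuMinus : k - nuMinus β α k w = 3 / 2 * ζ + √3 / 2 * I * w := by
  rw [nuMinus, div_eq_three_mul_div_three_mul (α : ℂ)]; ring

lemma im_sub_nuPlus :
    (k - nuPlus β α k w).im = 3 / 2 * (ζ).im - √3 / 2 * w.re := by
  rw [sub_nuPlus]; simp

lemma im_sub_nuMinus :
    (k - nuMinus β α k w).im = 3 / 2 * (ζ).im + √3 / 2 * w.re := by
  rw [sub_nuMinus]; simp

lemma im_nuPlus_sub_nuMinus : (nuPlus β α k w - nuMinus β α k w).im = √3 * w.re := by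
  rw [nuPlus_sub_nuMinus]; simp

lemma im_omegaC (hβ : β ≠ 0) :
    (omegaC β α δ k).im = β * (ζ).im * (3 * ‖ζ‖ ^ 2 - 4 * (ζ).im ^ 2 - 3 / 4 * μ) := by
  have hβ' : (β : ℂ) ≠ 0 := ofReal_ne_zero.mpr hβ
  have hcubic : omegaC β α δ k = β * ζ ^ 3 - ((3 / 4 * β * μ : ℝ) : ℂ) * ζ
      + ((β * (α / (3 * β)) ^ 3 - α * (α / (3 * β)) ^ 2 - δ * (α / (3 * β)) : ℝ) : ℂ) := by
    unfold omegaC; push_cast; field_simp; ring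
  have hζ3 : (ζ ^ 3).im = (ζ).im * (3 * ‖ζ‖ ^ 2 - 4 * (ζ).im ^ 2) := by
    rw [Complex.sq_norm, normSq_apply, pow_succ, pow_two]
    simp only [mul_im, mul_re]
    ring
  rw [hcubic]
  simp only [add_im, sub_im, mul_im, ofReal_re, ofReal_im, hζ3]
  ring

lemma mem_closure_D0 (hβ : 0 < β) (hk : k ∈ closure (D0 β α δ)) :
    0 ≤ (ζ).im ∧ 3 * ‖ζ‖ ^ 2 - 4 * (ζ).im ^ 2 ≤ 3 / 4 * μ := by
  have hsub : D0 β α δ ⊆ {z | 0 ≤ (z - α / (3 * β)).im} ∩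
      {z | 3 * ‖z - α / (3 * β)‖ ^ 2 - 4 * (z - α / (3 * β)).im ^ 2 ≤ 3 / 4 * μ} := by
    rintro z ⟨hω, hz⟩
    rw [im_omegaC hβ.ne'] at hω
    rw [← im_sub_div (α := α) (β := β)] at hz
    exact ⟨hz.le, (sub_neg.mp (neg_of_mul_neg_right hω (mul_pos hβ hz).le)).le⟩
  exact closure_minimal hsub ((isClosed_le (by fun_prop) (by fun_prop)).inter
    (isClosed_le (by fun_prop) (by fun_prop))) hk

lemma mem_closure_of_subset_lower {S : Set ℂ} (hβ : 0 < β)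
    (hS : ∀ z ∈ S, (omegaC β α δ z).im < 0 ∧ z.im < 0) (hk : k ∈ closure S) :
    (ζ).im ≤ 0 ∧ 3 / 4 * μ ≤ 3 * ‖ζ‖ ^ 2 - 4 * (ζ).im ^ 2 := by
  have hsub : S ⊆ {z | (z - α / (3 * β)).im ≤ 0} ∩
      {z | 3 / 4 * μ ≤ 3 * ‖z - α / (3 * β)‖ ^ 2 - 4 * (z - α / (3 * β)).im ^ 2} := by
    intro z hz
    obtain ⟨hω, hz⟩ := hS z hz
    rw [im_omegaC hβ.ne'] at hω
    rw [← im_sub_div (α := α) (β := β)] at hz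
    refine ⟨hz.le, (sub_pos.mp (pos_of_mul_neg_right hω ?_)).le⟩
    exact mul_nonpos_of_nonneg_of_nonpos hβ.le hz.le
  exact closure_minimal hsub ((isClosed_le (by fun_prop) (by fun_prop)).inter
    (isClosed_le (by fun_prop) (by fun_prop))) hk

lemma sector_of_mem_closure_D0 (hβ : 0 < β) (hμ : |μ| ≤ ‖ζ‖ ^ 2 / 6)
    (hk : k ∈ closure (D0 β α δ)) : 4 / 5 * ‖ζ‖ ≤ (ζ).im ∧ |(ζ).re| ≤ 3 / 5 * ‖ζ‖ := by
  obtain ⟨hy, hE⟩ := mem_closure_D0 hβ hk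
  have hs := norm_nonneg (ζ)
  have hs2 := sq_norm_sub_sq_re (ζ)
  have hμ' := (abs_le.mp hμ).2
  refine ⟨by nlinarith, abs_le.mpr ⟨by nlinarith, by nlinarith⟩⟩

lemma sector_of_mem_closure_Dp (hβ : 0 < β) (hμ : |μ| ≤ ‖ζ‖ ^ 2 / 6)
    (hk : k ∈ closure (Dp β α δ)) : (ζ).im ≤ 0 ∧ 9 / 20 * ‖ζ‖ ≤ (ζ).re := by
  obtain ⟨hy, hE⟩ := mem_closure_of_subset_lower hβ (fun z hz => ⟨hz.1, hz.2.1⟩) hk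
  have hx : 0 ≤ (ζ).re :=
    closure_minimal (t := {z : ℂ | 0 ≤ (z - α / (3 * β)).re}) (fun z hz => hz.2.2.le)
      (isClosed_le (by fun_prop) (by fun_prop)) hk
  have hs := norm_nonneg (ζ)
  have hs2 := sq_norm_sub_sq_re (ζ)
  have hμ' := (abs_le.mp hμ).1
  exact ⟨hy, by nlinarith⟩

lemma sector_of_mem_closure_Dm (hβ : 0 < β) (hμ : |μ| ≤ ‖ζ‖ ^ 2 / 6)
    (hk : k ∈ closure (Dm β α δ)) : (ζ).im ≤ 0 ∧ (ζ).re ≤ -(9 / 20 * ‖ζ‖) := by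
  obtain ⟨hy, hE⟩ := mem_closure_of_subset_lower hβ (fun z hz => ⟨hz.1, hz.2.1⟩) hk
  have hx : (ζ).re ≤ 0 :=
    closure_minimal (t := {z : ℂ | (z - α / (3 * β)).re ≤ 0}) (fun z hz => hz.2.2.le)
      (isClosed_le (by fun_prop) (by fun_prop)) hk
  have hs := norm_nonneg (ζ)
  have hs2 := sq_norm_sub_sq_re (ζ)
  have hμ' := (abs_le.mp hμ).1
  exact ⟨hy, by nlinarith⟩

lemma half_le_of_mem_closure_D0 (hβ : 0 < β) (hℓ : 0 < ℓ) (hsℓ : 9 ≤ ‖ζ‖ * ℓ)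
    (hμ : |μ| ≤ ‖ζ‖ ^ 2 / 6) (hwζ : ‖w - ζ‖ ≤ ‖ζ‖ / 8) (hk : k ∈ closure (D0 β α δ)) :
    1 / 2 * ‖ζ‖ ≤ ‖exp (I * k * ℓ) * DeltaFun β α ℓ k w‖ := by
  obtain ⟨hy, hx⟩ := sector_of_mem_closure_D0 hβ hμ hk
  obtain ⟨⟨-, hkp⟩, ⟨-, hkm⟩, ⟨hpm, -⟩⟩ := norm_bounds_of_near_equilateral hwζ
  obtain ⟨h3l, h3u⟩ := sqrt_three_bounds
  have hre := (abs_re_sub_re_le w _).trans hwζ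
  have hwre : |√3 / 2 * w.re| ≤ 7 / 8 * (29 / 40 * ‖ζ‖) := by
    rw [abs_mul, abs_of_nonneg (by positivity)]
    exact mul_le_mul (by linarith) (by linarith [abs_sub_abs_le_abs_sub w.re (ζ).re])
      (abs_nonneg _) (by norm_num)
  rw [DeltaFun_eq_delta3]
  refine half_le_norm_exp_mul_delta3 hℓ hsℓ (by rwa [nuPlus_sub_nuMinus]) (by rwa [sub_nuPlus])
    (by rwa [sub_nuMinus]) ?_ ?_
  · rw [im_sub_nuPlus]; linarith [(abs_le.mp hwre).2, norm_nonneg (ζ)]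
  · rw [im_sub_nuMinus]; linarith [(abs_le.mp hwre).1, norm_nonneg (ζ)]

lemma half_le_of_mem_closure_Dp (hβ : 0 < β) (hℓ : 0 < ℓ) (hsℓ : 9 ≤ ‖ζ‖ * ℓ)
    (hμ : |μ| ≤ ‖ζ‖ ^ 2 / 6) (hwζ : ‖w - ζ‖ ≤ ‖ζ‖ / 8) (hk : k ∈ closure (Dp β α δ)) :
    1 / 2 * ‖ζ‖ ≤ ‖exp (I * nuPlus β α k w * ℓ) * DeltaFun β α ℓ k w‖ := by
  obtain ⟨hy, hx⟩ := sector_of_mem_closure_Dp hβ hμ hk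
  obtain ⟨⟨-, hkp⟩, ⟨hkm, -⟩, ⟨-, hpm⟩⟩ := norm_bounds_of_near_equilateral hwζ
  obtain ⟨h3l, -⟩ := sqrt_three_bounds
  have hre := (abs_re_sub_re_le w _).trans hwζ
  have hwre : 173 / 100 * (13 / 40 * ‖ζ‖) ≤ √3 * w.re :=
    mul_le_mul h3l (by linarith [(abs_le.mp hre).1]) (by positivity) (by positivity)
  rw [DeltaFun_eq_delta3, delta3_rotate]
  refine half_le_norm_exp_mul_delta3 hℓ hsℓ (by rwa [norm_sub_rev _ k, sub_nuMinus])
    (by rwa [nuPlus_sub_nuMinus]) (by rwa [norm_sub_rev _ k, sub_nuPlus]) ?_ ?_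
  · rw [im_nuPlus_sub_nuMinus]; linarith [norm_nonneg (ζ)]
  · rw [← neg_sub k, neg_im, im_sub_nuPlus]; linarith [norm_nonneg (ζ)]

lemma half_le_of_mem_closure_Dm (hβ : 0 < β) (hℓ : 0 < ℓ) (hsℓ : 9 ≤ ‖ζ‖ * ℓ)
    (hμ : |μ| ≤ ‖ζ‖ ^ 2 / 6) (hwζ : ‖w - ζ‖ ≤ ‖ζ‖ / 8) (hk : k ∈ closure (Dm β α δ)) :
    1 / 2 * ‖ζ‖ ≤ ‖exp (I * nuMinus β α k w * ℓ) * DeltaFun β α ℓ k w‖ := by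
  obtain ⟨hy, hx⟩ := sector_of_mem_closure_Dm hβ hμ hk
  obtain ⟨⟨hkp, -⟩, ⟨-, hkm⟩, ⟨-, hpm⟩⟩ := norm_bounds_of_near_equilateral hwζ
  obtain ⟨h3l, -⟩ := sqrt_three_bounds
  have hre := (abs_re_sub_re_le w _).trans hwζ
  have hwre : 173 / 100 * (13 / 40 * ‖ζ‖) ≤ √3 * -w.re :=
    mul_le_mul h3l (by linarith [(abs_le.mp hre).2]) (by positivity) (by positivity)
  rw [DeltaFun_eq_delta3, ← delta3_rotate]
  refine half_le_norm_exp_mul_delta3 hℓ hsℓ (by rwa [sub_nuPlus])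
    (by rwa [norm_sub_rev _ k, sub_nuMinus])
    (by rwa [norm_sub_rev (nuMinus β α k w), nuPlus_sub_nuMinus]) ?_ ?_
  · rw [← neg_sub k, neg_im, im_sub_nuMinus]; linarith [norm_nonneg (ζ)]
  · rw [← neg_sub (nuPlus β α k w), neg_im, im_nuPlus_sub_nuMinus]; linarith [norm_nonneg (ζ)]

end Symmetries

lemma abs_four_mul_div_nine_sq_le {β A s : ℝ} (hβ : 0 < β)
    (h : 2 * √2 / (√3 * β) * √|A| ≤ s) : |4 * A / (9 * β ^ 2)| ≤ s ^ 2 / 6 := by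
  have hsq := pow_le_pow_left₀ (by positivity) h 2
  rw [mul_pow, div_pow, mul_pow, mul_pow, Real.sq_sqrt zero_le_two,
    Real.sq_sqrt zero_le_three, Real.sq_sqrt (abs_nonneg A)] at hsq
  rw [abs_div, abs_mul, abs_of_pos (by positivity : (0 : ℝ) < 9 * β ^ 2), abs_of_pos four_pos]
  rw [div_mul_eq_mul_div, div_le_iff₀ (by positivity)] at hsq
  rw [div_le_div_iff₀ (by positivity) (by norm_num)]
  nlinarith

/-- Exponential lower bound for the denominator `Δ`: there is `c > 0` (depending on
`α, β, δ, ℓ`) such that for each `n ∈ {0, +, −}` and each `k` in the closure of `D_n` with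
`|k − α/(3β)| ≥ R_Δ := max{(2√2/(√3β))√|α²+3βδ|, 9/ℓ}`, one has
`|e^{i ν_n ℓ} Δ(k)| ≥ c |k − α/(3β)|`. -/
theorem stmt18 (β α δ ℓ : ℝ) (hβ : 0 < β) (hℓ : 0 < ℓ) :
    ∃ c : ℝ, 0 < c ∧ ∀ k w : ℂ,
      w ^ 2 = (k - (α : ℂ) / (3 * (β : ℂ))) ^ 2
          - (4 / (9 * (β : ℂ) ^ 2)) * ((α : ℂ) ^ 2 + 3 * (β : ℂ) * (δ : ℂ)) →
      0 ≤ (w * (starRingEnd ℂ) (k - (α : ℂ) / (3 * (β : ℂ)))).re →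
      max (2 * Real.sqrt 2 / (Real.sqrt 3 * β) * Real.sqrt |α ^ 2 + 3 * β * δ|) (9 / ℓ) ≤
        norm (k - (α : ℂ) / (3 * (β : ℂ))) →
      ((k ∈ closure (D0 β α δ) →
        c * norm (k - (α : ℂ) / (3 * (β : ℂ))) ≤
          norm (Complex.exp (Complex.I * k * (ℓ : ℂ)) * DeltaFun β α ℓ k w)) ∧
       (k ∈ closure (Dp β α δ) →
        c * norm (k - (α : ℂ) / (3 * (β : ℂ))) ≤
          norm (Complex.exp (Complex.I * nuPlus β α k w * (ℓ : ℂ))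
            * DeltaFun β α ℓ k w)) ∧
       (k ∈ closure (Dm β α δ) →
        c * norm (k - (α : ℂ) / (3 * (β : ℂ))) ≤
          norm (Complex.exp (Complex.I * nuMinus β α k w * (ℓ : ℂ))
            * DeltaFun β α ℓ k w))) := by
  refine ⟨1 / 2, by norm_num, fun k w hw hbr hR => ?_⟩
  have hμ := abs_four_mul_div_nine_sq_le hβ ((le_max_left _ _).trans hR)
  have hsℓ : 9 ≤ ‖k - α / (3 * β)‖ * ℓ := (div_le_iff₀ hℓ).mp ((le_max_right _ _).trans hR)
  have hwζ := norm_sub_le_of_sq_eq_sub (by rw [hw]; push_cast; ring) hbr hμ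
  exact ⟨half_le_of_mem_closure_D0 hβ hℓ hsℓ hμ hwζ, half_le_of_mem_closure_Dp hβ hℓ hsℓ hμ hwζ,
    half_le_of_mem_closure_Dm hβ hℓ hsℓ hμ hwζ⟩
end
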